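/- arXiv:1402.4593 — 5 statements merged into one kernel-verified Lean document; each statement's English description precedes it below -/
import Mathlib

section
/- Suppose the dual stationarity condition λᴿ + ψ_lo + ψ_hi = 0 holds, together with both complementary slackness conditions: ψ_lo i * (W i * ŵ i + Δp i) = 0 and ψ_hi i * (W i * ŵ i + Δp i − W i * w̃ i) = 0 for every i. Then the balancing revenue of the stochastic producer admits the linear representation ⟨Δp, λᴿ⟩ = ⟨ŵ ∘ W, ψ_hi + ψ_lo⟩ − ⟨w̃ ∘ W, ψ_hi⟩. (Equation (8) of the paper, linearizing the bilinear term (Δp)ᵀλᴿ.) -/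
/-- Equation (8) of the paper (ConvMC balancing problem). Under the dual
stationarity condition `λᴿ + ψ_lo + ψ_hi = 0` and both complementary slackness
conditions, the balancing revenue linearizes as
`⟨Δp, λᴿ⟩ = ⟨ŵ ∘ W, ψ_hi + ψ_lo⟩ − ⟨w̃ ∘ W, ψ_hi⟩`. -/
theorem convMC_balancing_revenue_linearization {n : ℕ}
    (W wHat wTil dP lamR psiLo psiHi : Fin n → ℝ)
    (hstat : ∀ i, lamR i + psiLo i + psiHi i = 0)
    (hcsLo : ∀ i, psiLo i * (W i * wHat i + dP i) = 0)
    (hcsHi : ∀ i, psiHi i * (W i * wHat i + dP i - W i * wTil i) = 0) :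
    ∑ i, dP i * lamR i =
      (∑ i, (wHat i * W i) * (psiHi i + psiLo i)) - ∑ i, (wTil i * W i) * psiHi i := by
  rw [← Finset.sum_sub_distrib]
  apply Finset.sum_congr rfl
  intro i _
  have h := hstat i
  have h1 := hcsLo i
  have h2 := hcsHi i
  linear_combination dP i * h - h1 - h2
end

section
/- Suppose that for every pair (s, r) ∈ S × R the dual stationarity condition λᴿ_{s,r} + ψ_lo,{s,r} + ψ_hi,{s,r} = 0 holds, together with the complementary slackness conditions ψ_lo,{s,r} i * (W i * ŵ_s i + Δp_{s,r} i) = 0 and ψ_hi,{s,r} i * (W i * ŵ_s i + Δp_{s,r} i − W i * w̃_{s,r} i) = 0 for every i. Then the expected profit of the stochastic producer under ConvMC can be rewritten in linear form: Σ_{s∈S} π_s * (⟨ŵ_s ∘ W, λ_s⟩ + Σ_{r∈R} ⟨Δp_{s,r}, λᴿ_{s,r}⟩) − I = Σ_{s∈S} π_s * ⟨ŵ_s ∘ W, λ_s − Σ_{r∈R} λᴿ_{s,r}⟩ − Σ_{s∈S} Σ_{r∈R} π_s * ⟨w̃_{s,r} ∘ W, ψ_hi,{s,r}⟩ − I. (Equation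 (9) of the paper.) -/
/-- Equation (9) of the paper (ConvMC model). Under dual stationarity and both
complementary slackness conditions in every scenario pair `(s, r)`, the expected
profit of the stochastic producer under ConvMC rewrites in linear form. -/
theorem convMC_expected_profit_linearization {n : ℕ}
    {S R : Type*} [Fintype S] [Fintype R]
    (π : S → ℝ) (W : Fin n → ℝ) (I : ℝ)
    (wHat lam : S → Fin n → ℝ)
    (wTil dP lamR psiLo psiHi : S → R → Fin n → ℝ)
    (hstat : ∀ s r i, lamR s r i + psiLo s r i + psiHi s r i = 0)
    (hcsLo : ∀ s r i, psiLo s r i * (W i * wHat s i + dP s r i) = 0)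
    (hcsHi : ∀ s r i,
      psiHi s r i * (W i * wHat s i + dP s r i - W i * wTil s r i) = 0) :
    (∑ s, π s * ((∑ i, (wHat s i * W i) * lam s i)
        + ∑ r, ∑ i, dP s r i * lamR s r i)) - I =
      (∑ s, π s * ∑ i, (wHat s i * W i) * (lam s i - ∑ r, lamR s r i))
        - (∑ s, ∑ r, π s * ∑ i, (wTil s r i * W i) * psiHi s r i) - I := by
  have key : ∀ s r i, dP s r i * lamR s r i =
      -((wHat s i * W i) * lamR s r i) - (wTil s r i * W i) * psiHi s r i := by
    intro s r i
    linear_combination (dP s r i + wHat s i * W i) * hstat s r i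
      - hcsLo s r i - hcsHi s r i
  have hsum : ∀ s, (∑ i, (wHat s i * W i) * lam s i)
      + ∑ r, ∑ i, dP s r i * lamR s r i =
      (∑ i, (wHat s i * W i) * (lam s i - ∑ r, lamR s r i))
        - ∑ r, ∑ i, (wTil s r i * W i) * psiHi s r i := by
    intro s
    have swap : (∑ r : R, ∑ i : Fin n, (wHat s i * W i) * lamR s r i)
        = ∑ i : Fin n, (wHat s i * W i) * ∑ r : R, lamR s r i := by
      rw [Finset.sum_comm]
      exact Finset.sum_congr rfl fun i _ => (Finset.mul_sum _ _ _).symm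
    simp only [key, Finset.sum_sub_distrib, Finset.sum_neg_distrib, swap,
      mul_sub]
    ring
  calc (∑ s, π s * ((∑ i, (wHat s i * W i) * lam s i)
        + ∑ r, ∑ i, dP s r i * lamR s r i)) - I
      = (∑ s, π s * ((∑ i, (wHat s i * W i) * (lam s i - ∑ r, lamR s r i))
          - ∑ r, ∑ i, (wTil s r i * W i) * psiHi s r i)) - I := by
        congr 1; exact Finset.sum_congr rfl fun s _ => by rw [hsum s]
    _ = _ := by
        simp only [mul_sub, Finset.sum_sub_distrib, Finset.mul_sum]
end

section
/- Suppose the dual stationarity condition λ + Σ_{r∈R} (ψ_lo,r + ψ_hi,r) = 0 holds, together with both complementary slackness conditions ψ_lo,r i * (p^W i + Δp_r i) = 0 and ψ_hi,r i * (p^W i + Δp_r i − W i * w̃_r i) = 0 for every i and every r ∈ R. Then the day-ahead revenue of the stochastic producer admits the linear representation ⟨p^W, λ⟩ = Σ_{r∈R} ⟨Δp_r − W ∘ w̃_r, ψ_hi,r⟩ + Σ_{r∈R} ⟨Δp_r, ψ_lo,r⟩. (Equation (12) of the paper.) -/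
/-- Equation (12) of the paper (StocMC problem). Under the dual stationarity
condition `λ + Σ_r (ψ_lo,r + ψ_hi,r) = 0` and both complementary slackness
conditions for every `r`, the day-ahead revenue linearizes as
`⟨p^W, λ⟩ = Σ_r ⟨Δp_r − W ∘ w̃_r, ψ_hi,r⟩ + Σ_r ⟨Δp_r, ψ_lo,r⟩`. -/
theorem stocMC_dayahead_revenue_linearization {n : ℕ} {R : Type*} [Fintype R]
    (W pW lam : Fin n → ℝ) (wTil dP psiLo psiHi : R → Fin n → ℝ)
    (hstat : ∀ i, lam i + ∑ r, (psiLo r i + psiHi r i) = 0)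
    (hcsLo : ∀ r, ∀ i, psiLo r i * (pW i + dP r i) = 0)
    (hcsHi : ∀ r, ∀ i, psiHi r i * (pW i + dP r i - W i * wTil r i) = 0) :
    ∑ i, pW i * lam i =
      (∑ r, ∑ i, (dP r i - W i * wTil r i) * psiHi r i)
        + ∑ r, ∑ i, dP r i * psiLo r i := by
  rw [show (∑ r : R, ∑ i : Fin n, (dP r i - W i * wTil r i) * psiHi r i) =
      ∑ i : Fin n, ∑ r : R, (dP r i - W i * wTil r i) * psiHi r i from Finset.sum_comm,
    show (∑ r : R, ∑ i : Fin n, dP r i * psiLo r i) =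
      ∑ i : Fin n, ∑ r : R, dP r i * psiLo r i from Finset.sum_comm,
    ← Finset.sum_add_distrib]
  refine Finset.sum_congr rfl fun i _ => ?_
  have h1 := hstat i
  have h2 : ∑ r, pW i * (psiLo r i + psiHi r i) =
      ∑ r, (-(dP r i * psiLo r i) + -((dP r i - W i * wTil r i) * psiHi r i)) := by
    refine Finset.sum_congr rfl fun r _ => ?_
    have := hcsLo r i
    have := hcsHi r i
    nlinarith [hcsLo r i, hcsHi r i]
  have hl : lam i = -∑ r, (psiLo r i + psiHi r i) := by linarith
  have : pW i * lam i = -∑ r, pW i * (psiLo r i + psiHi r i) := by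
    rw [hl, ← Finset.mul_sum]; ring
  rw [this, h2]
  simp [Finset.sum_add_distrib]
end

section
/- Suppose both dual stationarity conditions hold, namely λ + Σ_{r∈R} (ψ_lo,r + ψ_hi,r) = 0 and ψ_lo,r + ψ_hi,r + λᴿ_r = 0 for every r ∈ R, together with both complementary slackness conditions ψ_lo,r i * (p^W i + Δp_r i) = 0 and ψ_hi,r i * (p^W i + Δp_r i − W i * w̃_r i) = 0 for every i and every r ∈ R. Then the total (day-ahead plus balancing) revenue of the stochastic producer in this scenario satisfies ⟨p^W, λ⟩ + Σ_{r∈R} ⟨Δp_r, λᴿ_r⟩ = −Σ_{r∈R} ⟨W ∘ w̃_r, ψ_hi,r⟩; that is, the scenario profit equals the expected market value of the realized stochastic production, measured by the shadow prices ψ_hi,r of the available-production constraint. (Combination of equations (12) and (13) yielding expression (14) of the paper.) -/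
/-- Combination of equations (12) and (13) yielding expression (14) of the paper
(StocMC problem, one day-ahead scenario). Under both dual stationarity
conditions and both complementary slackness conditions, the total (day-ahead
plus balancing) revenue of the stochastic producer satisfies
`⟨p^W, λ⟩ + Σ_r ⟨Δp_r, λᴿ_r⟩ = −Σ_r ⟨W ∘ w̃_r, ψ_hi,r⟩`. -/
theorem stocMC_scenario_profit_linearization {n : ℕ} {R : Type*} [Fintype R]
    (W pW lam : Fin n → ℝ) (wTil dP lamR psiLo psiHi : R → Fin n → ℝ)
    (hstatW : ∀ i, lam i + ∑ r, (psiLo r i + psiHi r i) = 0)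
    (hstatR : ∀ r, ∀ i, psiLo r i + psiHi r i + lamR r i = 0)
    (hcsLo : ∀ r, ∀ i, psiLo r i * (pW i + dP r i) = 0)
    (hcsHi : ∀ r, ∀ i, psiHi r i * (pW i + dP r i - W i * wTil r i) = 0) :
    (∑ i, pW i * lam i) + (∑ r, ∑ i, dP r i * lamR r i) =
      -(∑ r, ∑ i, (W i * wTil r i) * psiHi r i) := by
  have hl : ∀ i, lam i = -∑ r, (psiLo r i + psiHi r i) := fun i => by
    have := hstatW i; linarith
  have hr : ∀ r i, lamR r i = -(psiLo r i + psiHi r i) := fun r i => by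
    have := hstatR r i; linarith
  simp only [hl, hr]
  simp only [mul_neg, Finset.mul_sum, Finset.sum_neg_distrib, ← neg_add, neg_inj]
  rw [Finset.sum_comm, ← Finset.sum_add_distrib]
  refine Finset.sum_congr rfl fun r _ => ?_
  rw [← Finset.sum_add_distrib]
  refine Finset.sum_congr rfl fun i _ => ?_
  linear_combination hcsLo r i + hcsHi r i
end

section
/- Suppose that for every day-ahead scenario s ∈ S both dual stationarity conditions hold, namely λ_s + Σ_{r∈R} (ψ_lo,{s,r} + ψ_hi,{s,r}) = 0 and ψ_lo,{s,r} + ψ_hi,{s,r} + λᴿ_{s,r} = 0 for every r ∈ R, together with the complementary slackness conditions ψ_lo,{s,r} i * (p^W_s i + Δp_{s,r} i) = 0 and ψ_hi,{s,r} i * (p^W_s i + Δp_{s,r} i − W i * w̃_{s,r} i) = 0 for every i, r. Then the expected profit of the stochastic producer under StocMC admits the linear representation Σ_{s∈S} π_s * (⟨p^W_s, λ_s⟩ + Σ_{r∈R} ⟨Δp_{s,r}, λᴿ_{s,r}⟩) − I = −Σ_{s∈S} Σ_{r∈R} π_s * ⟨W ∘ w̃_{s,r}, ψ_hi,{s,r}⟩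 − I. (Equation (14) of the paper.) -/
/-- Equation (14) of the paper (StocMC model). If, in every day-ahead scenario
`s`, both dual stationarity conditions and both complementary slackness
conditions hold, then the expected profit of the stochastic producer under
StocMC admits the linear representation
`Σ_s π_s (⟨p^W_s, λ_s⟩ + Σ_r ⟨Δp_{s,r}, λᴿ_{s,r}⟩) − I
  = −Σ_s Σ_r π_s ⟨W ∘ w̃_{s,r}, ψ_hi,{s,r}⟩ − I`. -/
theorem stocMC_expected_profit_linearization {n : ℕ}
    {S R : Type*} [Fintype S] [Fintype R]
    (π : S → ℝ) (W : Fin n → ℝ) (I : ℝ)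
    (pW lam : S → Fin n → ℝ)
    (wTil dP lamR psiLo psiHi : S → R → Fin n → ℝ)
    (hstatW : ∀ s i, lam s i + ∑ r, (psiLo s r i + psiHi s r i) = 0)
    (hstatR : ∀ s r i, psiLo s r i + psiHi s r i + lamR s r i = 0)
    (hcsLo : ∀ s r i, psiLo s r i * (pW s i + dP s r i) = 0)
    (hcsHi : ∀ s r i,
      psiHi s r i * (pW s i + dP s r i - W i * wTil s r i) = 0) :
    (∑ s, π s * ((∑ i, pW s i * lam s i)
        + ∑ r, ∑ i, dP s r i * lamR s r i)) - I =
      -(∑ s, ∑ r, π s * ∑ i, (W i * wTil s r i) * psiHi s r i) - I := by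
  have key : ∀ s, (∑ i, pW s i * lam s i)
      + ∑ r, ∑ i, dP s r i * lamR s r i
      = -∑ r, ∑ i, (W i * wTil s r i) * psiHi s r i := by
    intro s
    have h1 : (∑ i, pW s i * lam s i)
        = ∑ r, ∑ i, -(pW s i * (psiLo s r i + psiHi s r i)) := by
      rw [Finset.sum_comm]
      refine Finset.sum_congr rfl fun i _ => ?_
      have h := hstatW s i
      have hl : lam s i = -∑ r, (psiLo s r i + psiHi s r i) := by linarith
      rw [hl, mul_neg, Finset.mul_sum, ← Finset.sum_neg_distrib]
    have h2 : ∀ r, (∑ i, dP s r i * lamR s r i)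
        = ∑ i, -(dP s r i * (psiLo s r i + psiHi s r i)) := by
      intro r
      refine Finset.sum_congr rfl fun i _ => ?_
      have h := hstatR s r i
      have hl : lamR s r i = -(psiLo s r i + psiHi s r i) := by linarith
      rw [hl, mul_neg]
    rw [h1]
    simp only [h2]
    have h3 : ∀ r : R, (∑ i, -(pW s i * (psiLo s r i + psiHi s r i)))
        + ∑ i, -(dP s r i * (psiLo s r i + psiHi s r i))
        = -∑ i, (W i * wTil s r i) * psiHi s r i := by
      intro r
      rw [← Finset.sum_neg_distrib, ← Finset.sum_add_distrib]
      refine Finset.sum_congr rfl fun i _ => ?_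
      have hlo := hcsLo s r i
      have hhi := hcsHi s r i
      nlinarith [hlo, hhi]
    rw [← Finset.sum_add_distrib, Finset.sum_congr rfl fun r _ => h3 r, Finset.sum_neg_distrib]
  congr 1
  rw [Finset.sum_congr rfl fun s _ => by rw [key s]]
  rw [← Finset.sum_neg_distrib]
  refine Finset.sum_congr rfl fun s _ => ?_
  rw [mul_neg, Finset.mul_sum]
end
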